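/- arXiv:1011.4632 — 5 statements merged into one kernel-verified Lean document; each statement's English description precedes it below -/
import Mathlib

section
/- Let A be an n×d real matrix of rank ρ with truncated SVD A_k = U_kΣ_kV_kᵀ and residual A_{ρ−k} = A − A_k, let k < min{n,d}, ε ∈ (0,1/3), γ ≥ 1, and let R be any d×t real matrix. Let X_opt minimize ‖A − XXᵀA‖_F² over all n×k indicator matrices X. Suppose: (a) V_kᵀR has rank k and ‖(V_kᵀR)⁺‖₂ ≤ 1/(1−ε); (b) ‖A_k − AR(V_kᵀR)⁺V_kᵀ‖_F ≤ 4ε‖A − A_k‖_F; (c) ‖(I − X_optX_optᵀ)AR‖_F ≤ √(1+ε)·‖(I − X_optX_optᵀ)A‖_F. Then every n×k indicator matrix X̃ satisfying ‖(I − X̃X̃ᵀ)AR‖_F² ≤ γ‖(I − X_optX_optᵀ)AR‖_F² also satisfies ‖A − X̃X̃ᵀA‖_F² ≤ (1 + (1+28ε)γ)·‖A − X_optX_optᵀA‖_F². -/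
open MeasureTheory
open scoped Matrix

/-- Frobenius norm of a real matrix. -/
noncomputable def frobNorm {m n : ℕ} (M : Matrix (Fin m) (Fin n) ℝ) : ℝ :=
  Real.sqrt (∑ i, ∑ j, (M i j) ^ 2)

/-- Spectral (operator) norm of a real matrix, viewed as a linear map between
Euclidean spaces. -/
noncomputable def specNorm {m n : ℕ} (M : Matrix (Fin m) (Fin n) ℝ) : ℝ :=
  ‖LinearMap.toContinuousLinearMap (Matrix.toEuclideanLin M)‖

/-- `P` is the Moore–Penrose pseudoinverse of `M` (the four Penrose conditions;
such a `P` is unique). -/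
def IsMoorePenrose {m n : ℕ} (M : Matrix (Fin m) (Fin n) ℝ)
    (P : Matrix (Fin n) (Fin m) ℝ) : Prop :=
  M * P * M = M ∧ P * M * P = P ∧ (M * P)ᵀ = M * P ∧ (P * M)ᵀ = P * M

/-- `X` is an `n × k` cluster indicator matrix: each row `i` has a single nonzero
entry, in column `f i`, equal to `1/√(z_{f i})` where `z_j` is the number of rows
assigned to column `j`. -/
def IsIndicator {n k : ℕ} (X : Matrix (Fin n) (Fin k) ℝ) : Prop :=
  ∃ f : Fin n → Fin k, ∀ i j, X i j =
    if f i = j then 1 / Real.sqrt ((Finset.univ.filter fun i' => f i' = j).card) else 0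

/-- The singular values of a `k × t` real matrix `M` (in some order): the square
roots of the eigenvalues of `M * Mᵀ`. -/
noncomputable def singVals {k t : ℕ} (M : Matrix (Fin k) (Fin t) ℝ) (i : Fin k) : ℝ :=
  Real.sqrt ((Matrix.isHermitian_mul_conjTranspose_self M).eigenvalues i)

/-- The `d × t` random sign matrix with entries `±1/√t`, as a function of the
sample point `ω` (a `d × t` array of fair coins). -/
noncomputable def signMatrix (d t : ℕ) (ω : Fin d → Fin t → Bool) :
    Matrix (Fin d) (Fin t) ℝ :=
  Matrix.of fun i j => (if ω i j then (1 : ℝ) else -1) / Real.sqrt t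

/-- The law of a `d × t` matrix of i.i.d. fair signs: the uniform probability
measure on all `d × t` sign patterns. -/
noncomputable def signMeasure (d t : ℕ) : Measure (Fin d → Fin t → Bool) :=
  (PMF.uniformOfFintype (Fin d → Fin t → Bool)).toMeasure

/-!
Write `Π = X̃X̃ᵀ` and `B = ‖(I - X_opt X_optᵀ)A‖_F`. For an indicator matrix `XᵀX` is idempotent,
so `XXᵀ` is an orthogonal projection of trace at most `k`. Since the rows of `A - A_k` are
orthogonal to those of `A_k`,
`‖(I - Π)A‖² = ‖(I - Π)A_k‖² + ‖(I - Π)(A - A_k)‖²`.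
The second term is at most `‖A - A_k‖² ≤ B²` (Eckart–Young). For the first, split
`A_k = AR(V_kᵀR)⁺V_kᵀ + (A_k - AR(V_kᵀR)⁺V_kᵀ)`: hypotheses (a), (c) and the one on `X̃` bound the
first part by `√γ √(1+ε) B / (1-ε)`, and (b) bounds the second by `4εB`; finally
`(√γ √(1+ε)/(1-ε) + 4ε)² ≤ (1+28ε)γ` for `ε < 1/3`.

Eckart–Young is proved directly: for a projection `Q` of trace `≤ k`,
`‖QA‖² = ∑ᵢ (UᵀQU)ᵢᵢ σᵢ²`, where the weights `(UᵀQU)ᵢᵢ` lie in `[0, 1]` and sum to at most `k`,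
so this is at most `σ₀² + ⋯ + σ_{k-1}² = ‖A‖² - ‖A - A_k‖²`.
-/

/-- `U * rectDiag n d s * Wᵀ` is the SVD `UΣWᵀ` with `Σᵢᵢ = s i`, and replacing `s` by
`truncate k s` gives its rank-`k` truncation `A_k`. -/
def rectDiag (n d : ℕ) (s : ℕ → ℝ) : Matrix (Fin n) (Fin d) ℝ :=
  Matrix.of fun i j => if (i : ℕ) = j then s i else 0

def truncate (k : ℕ) (s : ℕ → ℝ) (i : ℕ) : ℝ := if i < k then s i else 0

theorem sum_mul_le_sum_lt_of_antitone {n k : ℕ} (hkn : k ≤ n) {e : ℕ → ℝ} (he : Antitone e)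
    (hek : 0 ≤ e k) {q : Fin n → ℝ} (hq : ∀ i, q i ∈ Set.Icc 0 1) (hqk : ∑ i, q i ≤ k) :
    ∑ i, q i * e i ≤ ∑ i : Fin n, if (i : ℕ) < k then e i else 0 := by
  have hterm (i : Fin n) :
      q i * e i ≤ (if (i : ℕ) < k then e i - e k else 0) + q i * e k := by
    obtain ⟨hq0, hq1⟩ := hq i
    split_ifs with hik
    · nlinarith [he hik.le]
    · nlinarith [he (not_lt.mp hik)]
  have hcount : ∑ i : Fin n, (if (i : ℕ) < k then e k else 0) = k * e k := by
    rw [Finset.sum_ite, Finset.sum_const_zero, add_zero, Finset.sum_const,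
      Fin.card_filter_val_lt, min_eq_right hkn, nsmul_eq_mul]
  calc ∑ i, q i * e i
      ≤ ∑ i : Fin n, ((if (i : ℕ) < k then e i - e k else 0) + q i * e k) :=
        Finset.sum_le_sum fun i _ => hterm i
    _ = ∑ i : Fin n, (if (i : ℕ) < k then e i else 0) - k * e k + (∑ i, q i) * e k := by
        rw [Finset.sum_add_distrib, ← hcount, ← Finset.sum_sub_distrib, Finset.sum_mul]
        congr 1
        exact Finset.sum_congr rfl fun i _ => by split_ifs <;> ring
    _ ≤ ∑ i : Fin n, if (i : ℕ) < k then e i else 0 := by nlinarith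

theorem sqrt_mul_sqrt_div_add_sq_le {ε γ : ℝ} (hε0 : 0 < ε) (hε : ε < 1 / 3) (hγ : 1 ≤ γ) :
    (√γ * √(1 + ε) / (1 - ε) + 4 * ε) ^ 2 ≤ (1 + 28 * ε) * γ := by
  have h1ε : 0 < 1 - ε := by linarith
  have hg : 1 ≤ √γ := Real.one_le_sqrt.mpr hγ
  have hs : √(1 + ε) ≤ 1 + ε / 2 := Real.sqrt_le_iff.mpr ⟨by linarith, by nlinarith⟩
  have hinv : 1 / (1 - ε) ≤ 1 + 3 * ε / 2 := by
    rw [div_le_iff₀ h1ε]; nlinarith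
  have hc : √(1 + ε) / (1 - ε) + 4 * ε ≤ 1 + 6 * ε + ε ^ 2 := by
    calc √(1 + ε) / (1 - ε) + 4 * ε = √(1 + ε) * (1 / (1 - ε)) + 4 * ε := by ring
      _ ≤ (1 + ε / 2) * (1 + 3 * ε / 2) + 4 * ε := by gcongr
      _ ≤ 1 + 6 * ε + ε ^ 2 := by nlinarith
  calc (√γ * √(1 + ε) / (1 - ε) + 4 * ε) ^ 2
      ≤ (√γ * (√(1 + ε) / (1 - ε) + 4 * ε)) ^ 2 := by
        have : 0 ≤ √(1 + ε) / (1 - ε) := by positivity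
        gcongr
        rw [mul_add, mul_div_assoc]; nlinarith
    _ ≤ γ * (1 + 6 * ε + ε ^ 2) ^ 2 := by
        rw [mul_pow, Real.sq_sqrt (by linarith)]; gcongr
    _ ≤ (1 + 28 * ε) * γ := by
        rw [mul_comm]; gcongr
        nlinarith [mul_pos hε0 (sub_pos.mpr hε), mul_pos (pow_pos hε0 2) (sub_pos.mpr hε),
          mul_pos (pow_pos hε0 3) (sub_pos.mpr hε)]

namespace Matrix

variable {m n d k t : ℕ}

section FrobeniusNorm

theorem frobNorm_nonneg (M : Matrix (Fin m) (Fin n) ℝ) : 0 ≤ frobNorm M :=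
  Real.sqrt_nonneg _

theorem frobNorm_sq_eq_trace (M : Matrix (Fin m) (Fin n) ℝ) :
    frobNorm M ^ 2 = (M * Mᵀ).trace := by
  rw [frobNorm, Real.sq_sqrt (by positivity)]
  simp [trace, mul_apply, sq]

section

attribute [local instance] Matrix.frobeniusNormedAddCommGroup

theorem frobNorm_eq_norm (M : Matrix (Fin m) (Fin n) ℝ) : frobNorm M = ‖M‖ := by
  simp [frobNorm, frobenius_norm_def, Real.sqrt_eq_rpow]

theorem frobNorm_add_le (M N : Matrix (Fin m) (Fin n) ℝ) :
    frobNorm (M + N) ≤ frobNorm M + frobNorm N := by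
  simpa only [frobNorm_eq_norm] using norm_add_le M N

end

theorem frobNorm_add_sq_of_trace_eq_zero {M N : Matrix (Fin m) (Fin n) ℝ}
    (h : (M * Nᵀ).trace = 0) :
    frobNorm (M + N) ^ 2 = frobNorm M ^ 2 + frobNorm N ^ 2 := by
  have h' : (N * Mᵀ).trace = 0 := by
    rw [← trace_transpose, transpose_mul, transpose_transpose, h]
  simp only [frobNorm_sq_eq_trace, transpose_add, Matrix.add_mul, Matrix.mul_add, trace_add,
    h, h']
  ring

theorem frobNorm_mul_add_sq_of_mul_transpose_eq_zero (M : Matrix (Fin m) (Fin n) ℝ)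
    {A₁ A₂ : Matrix (Fin n) (Fin d) ℝ} (h : A₂ * A₁ᵀ = 0) :
    frobNorm (M * (A₁ + A₂)) ^ 2 = frobNorm (M * A₁) ^ 2 + frobNorm (M * A₂) ^ 2 := by
  refine Matrix.mul_add M A₁ A₂ ▸ frobNorm_add_sq_of_trace_eq_zero ?_
  rw [← trace_transpose, transpose_mul, transpose_transpose, transpose_mul, Matrix.mul_assoc,
    ← Matrix.mul_assoc A₂, h, Matrix.zero_mul, Matrix.mul_zero, trace_zero]

theorem frobNorm_mul_transpose_of_transpose_mul_eq_one {M : Matrix (Fin m) (Fin n) ℝ}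
    {V : Matrix (Fin k) (Fin n) ℝ} (hV : Vᵀ * V = 1) : frobNorm (M * Vᵀ) = frobNorm M := by
  have : (M * Vᵀ) * (M * Vᵀ)ᵀ = M * (Vᵀ * V) * Mᵀ := by
    simp only [transpose_mul, transpose_transpose, Matrix.mul_assoc]
  rw [← sq_eq_sq₀ (frobNorm_nonneg _) (frobNorm_nonneg _), frobNorm_sq_eq_trace,
    frobNorm_sq_eq_trace, this, hV, Matrix.mul_one]

section

open scoped Matrix.Norms.L2Operator

theorem frobNorm_sq_eq_sum_norm_row (M : Matrix (Fin m) (Fin n) ℝ) :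
    frobNorm M ^ 2 = ∑ i, ‖WithLp.toLp 2 (M i)‖ ^ 2 := by
  rw [frobNorm, Real.sq_sqrt (by positivity)]
  simp [EuclideanSpace.norm_sq_eq]

theorem frobNorm_mul_le_mul_specNorm (M : Matrix (Fin m) (Fin n) ℝ)
    (P : Matrix (Fin n) (Fin k) ℝ) : frobNorm (M * P) ≤ frobNorm M * specNorm P := by
  have hP : specNorm P = ‖Pᵀ‖ := by
    rw [← conjTranspose_eq_transpose_of_trivial, l2_opNorm_conjTranspose]; rfl
  have hrow (i) : ‖WithLp.toLp 2 ((M * P) i)‖ ≤ ‖Pᵀ‖ * ‖WithLp.toLp 2 (M i)‖ := by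
    simpa [mul_apply_eq_vecMul, mulVec_transpose] using l2_opNorm_mulVec Pᵀ (WithLp.toLp 2 (M i))
  rw [hP]
  refine (pow_le_pow_iff_left₀ (frobNorm_nonneg _)
    (mul_nonneg (frobNorm_nonneg M) (norm_nonneg Pᵀ)) two_ne_zero).mp ?_
  rw [mul_pow, frobNorm_sq_eq_sum_norm_row, frobNorm_sq_eq_sum_norm_row, Finset.sum_mul]
  gcongr with i
  rw [← mul_pow, mul_comm]
  exact pow_le_pow_left₀ (norm_nonneg _) (hrow i) 2

end

end FrobeniusNorm

section Projection

variable {Q : Matrix (Fin n) (Fin n) ℝ}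

theorem frobNorm_mul_sq_add_frobNorm_one_sub_mul_sq (hQs : Q.IsSymm)
    (hQi : IsIdempotentElem Q) (M : Matrix (Fin n) (Fin d) ℝ) :
    frobNorm (Q * M) ^ 2 + frobNorm ((1 - Q) * M) ^ 2 = frobNorm M ^ 2 := by
  have horth : (Q * M * ((1 - Q) * M)ᵀ).trace = 0 := by
    rw [transpose_mul, transpose_sub, transpose_one, hQs.eq, ← Matrix.mul_assoc,
      trace_mul_comm, ← Matrix.mul_assoc, ← Matrix.mul_assoc, Matrix.sub_mul, hQi.eq,
      Matrix.one_mul, sub_self, Matrix.zero_mul, Matrix.zero_mul, trace_zero]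
  rw [← frobNorm_add_sq_of_trace_eq_zero horth, ← Matrix.add_mul, add_sub_cancel, Matrix.one_mul]

theorem frobNorm_one_sub_mul_le (hQs : Q.IsSymm) (hQi : IsIdempotentElem Q)
    (M : Matrix (Fin n) (Fin d) ℝ) : frobNorm ((1 - Q) * M) ≤ frobNorm M := by
  refine (pow_le_pow_iff_left₀ (frobNorm_nonneg _) (frobNorm_nonneg _) two_ne_zero).mp ?_
  rw [← frobNorm_mul_sq_add_frobNorm_one_sub_mul_sq hQs hQi M]
  exact le_add_of_nonneg_left (sq_nonneg _)

theorem diag_mem_Icc_of_isSymm_of_isIdempotentElem (hQs : Q.IsSymm) (hQi : IsIdempotentElem Q)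
    (i : Fin n) : Q i i ∈ Set.Icc 0 1 := by
  have hii : Q i i = ∑ j, Q i j ^ 2 := by
    conv_lhs => rw [← hQi.eq]
    simp only [mul_apply, sq]
    exact Finset.sum_congr rfl fun j _ => by rw [← hQs.apply i j]
  have hsq : Q i i ^ 2 ≤ Q i i := by
    conv_rhs => rw [hii]
    exact Finset.single_le_sum (fun j _ => sq_nonneg (Q i j)) (Finset.mem_univ i)
  have h0 : 0 ≤ Q i i := hii ▸ Finset.sum_nonneg fun j _ => sq_nonneg _
  exact ⟨h0, by nlinarith⟩

theorem frobNorm_one_sub_mul_le_add (hQs : Q.IsSymm) (hQi : IsIdempotentElem Q)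
    {V : Matrix (Fin d) (Fin k) ℝ} (hV : Vᵀ * V = 1) (M : Matrix (Fin n) (Fin d) ℝ)
    (N : Matrix (Fin n) (Fin t) ℝ) (P : Matrix (Fin t) (Fin k) ℝ) :
    frobNorm ((1 - Q) * M) ≤
      frobNorm ((1 - Q) * N) * specNorm P + frobNorm (M - N * P * Vᵀ) := by
  have hsplit : (1 - Q) * M = (1 - Q) * N * P * Vᵀ + (1 - Q) * (M - N * P * Vᵀ) := by
    simp only [Matrix.mul_assoc]
    rw [Matrix.mul_sub, add_sub_cancel]
  rw [hsplit]
  refine (frobNorm_add_le _ _).trans (add_le_add ?_ (frobNorm_one_sub_mul_le hQs hQi _))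
  rw [frobNorm_mul_transpose_of_transpose_mul_eq_one hV]
  exact frobNorm_mul_le_mul_specNorm _ _

theorem frobNorm_one_sub_mul_sq_le (hQs : Q.IsSymm) (hQi : IsIdempotentElem Q)
    {V : Matrix (Fin d) (Fin k) ℝ} (hV : Vᵀ * V = 1) {A Ak : Matrix (Fin n) (Fin d) ℝ}
    (hperp : (A - Ak) * Akᵀ = 0) (N : Matrix (Fin n) (Fin t) ℝ) (P : Matrix (Fin t) (Fin k) ℝ) :
    frobNorm ((1 - Q) * A) ^ 2 ≤
      (frobNorm ((1 - Q) * N) * specNorm P + frobNorm (Ak - N * P * Vᵀ)) ^ 2 +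
        frobNorm (A - Ak) ^ 2 := by
  have hsplit := frobNorm_mul_add_sq_of_mul_transpose_eq_zero (1 - Q) hperp
  rw [add_sub_cancel] at hsplit
  rw [hsplit]
  gcongr
  · exact frobNorm_nonneg _
  · exact frobNorm_one_sub_mul_le_add hQs hQi hV Ak N P
  · exact frobNorm_nonneg _
  · exact frobNorm_one_sub_mul_le hQs hQi _

theorem frobNorm_one_sub_mul_sq_le_of_approx {ε γ B : ℝ} (hε0 : 0 < ε) (hε : ε < 1 / 3)
    (hγ : 1 ≤ γ) {Q : Matrix (Fin n) (Fin n) ℝ} (hQs : Q.IsSymm) (hQi : IsIdempotentElem Q)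
    {V : Matrix (Fin d) (Fin k) ℝ} (hV : Vᵀ * V = 1) {A Ak : Matrix (Fin n) (Fin d) ℝ}
    (hperp : (A - Ak) * Akᵀ = 0) (hres : frobNorm (A - Ak) ≤ B) {N : Matrix (Fin n) (Fin t) ℝ}
    {P : Matrix (Fin t) (Fin k) ℝ} (hN : frobNorm ((1 - Q) * N) ≤ √γ * (√(1 + ε) * B))
    (hP : specNorm P ≤ 1 / (1 - ε)) (happrox : frobNorm (Ak - N * P * Vᵀ) ≤ 4 * ε * B) :
    frobNorm ((1 - Q) * A) ^ 2 ≤ (1 + (1 + 28 * ε) * γ) * B ^ 2 := by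
  have hB : 0 ≤ B := (frobNorm_nonneg _).trans hres
  have hfirst : frobNorm ((1 - Q) * N) * specNorm P + frobNorm (Ak - N * P * Vᵀ)
      ≤ (√γ * √(1 + ε) / (1 - ε) + 4 * ε) * B := by
    calc _ ≤ √γ * (√(1 + ε) * B) * (1 / (1 - ε)) + 4 * ε * B :=
          add_le_add (mul_le_mul hN hP (norm_nonneg _) (by positivity)) happrox
      _ = _ := by ring
  calc _ ≤ (frobNorm ((1 - Q) * N) * specNorm P + frobNorm (Ak - N * P * Vᵀ)) ^ 2
          + frobNorm (A - Ak) ^ 2 :=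
        frobNorm_one_sub_mul_sq_le hQs hQi hV hperp N P
    _ ≤ ((√γ * √(1 + ε) / (1 - ε) + 4 * ε) * B) ^ 2 + B ^ 2 :=
        add_le_add
          (pow_le_pow_left₀ (add_nonneg (mul_nonneg (frobNorm_nonneg _) (norm_nonneg _))
            (frobNorm_nonneg _)) hfirst 2)
          (pow_le_pow_left₀ (frobNorm_nonneg _) hres 2)
    _ ≤ (1 + 28 * ε) * γ * B ^ 2 + B ^ 2 := by
        rw [mul_pow]; gcongr; exact sqrt_mul_sqrt_div_add_sq_le hε0 hε hγ
    _ = _ := by ring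

end Projection

section Gram

variable {X : Matrix (Fin n) (Fin k) ℝ}

theorem mul_transpose_mul_self_of_isIdempotentElem (hX : IsIdempotentElem (Xᵀ * X)) :
    X * (Xᵀ * X) = X := by
  set G := Xᵀ * X with hG
  have hGt : Gᵀ = G := transpose_mul _ _
  have hzero : (X * G - X)ᵀ * (X * G - X) = 0 := by
    have : (X * G - X)ᵀ * (X * G - X) = Gᵀ * G * G - Gᵀ * G - G * G + G := by
      simp only [transpose_sub, transpose_mul, Matrix.sub_mul, Matrix.mul_sub, hG,
        Matrix.mul_assoc]
      abel
    rw [this, hGt, hX.eq, hX.eq]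
    abel
  rwa [← conjTranspose_eq_transpose_of_trivial, conjTranspose_mul_self_eq_zero,
    sub_eq_zero] at hzero

theorem isIdempotentElem_mul_transpose (hX : IsIdempotentElem (Xᵀ * X)) :
    IsIdempotentElem (X * Xᵀ) := by
  rw [IsIdempotentElem, ← Matrix.mul_assoc, Matrix.mul_assoc X Xᵀ X,
    mul_transpose_mul_self_of_isIdempotentElem hX]

theorem trace_mul_transpose_le_of_isIdempotentElem (hX : IsIdempotentElem (Xᵀ * X)) :
    (X * Xᵀ).trace ≤ k := by
  rw [trace_mul_comm, trace]
  calc ∑ j, (Xᵀ * X) j j ≤ ∑ _j : Fin k, (1 : ℝ) := Finset.sum_le_sum fun j _ =>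
        (diag_mem_Icc_of_isSymm_of_isIdempotentElem (transpose_mul _ _) hX j).2
    _ = k := by simp

end Gram

section SVD

variable {U : Matrix (Fin n) (Fin n) ℝ} {W : Matrix (Fin d) (Fin d) ℝ}

theorem rectDiag_sub (s s' : ℕ → ℝ) :
    rectDiag n d (s - s') = rectDiag n d s - rectDiag n d s' := by
  ext i j
  simp only [rectDiag, of_apply, sub_apply, Pi.sub_apply]
  split_ifs <;> ring

theorem rectDiag_mul_transpose (s s' : ℕ → ℝ) :
    rectDiag n d s * (rectDiag n d s')ᵀ =
      diagonal fun i : Fin n => if (i : ℕ) < d then s i * s' i else 0 := by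
  ext i i'
  simp only [rectDiag, mul_apply, transpose_apply, of_apply, diagonal_apply]
  by_cases hi : (i : ℕ) < d
  · rw [Finset.sum_eq_single ⟨i, hi⟩ (fun j _ hj => by
      simp [show (i : ℕ) ≠ j from fun h => hj (Fin.ext h.symm)]) (by simp)]
    rcases eq_or_ne i i' with rfl | hii
    · simp [hi]
    · simp [hii, hii.symm, Fin.val_inj]
  · simp only [hi, if_false, ite_self]
    refine Finset.sum_eq_zero fun j _ => ?_
    simp [show (i : ℕ) ≠ j by omega]

theorem svd_mul_transpose_svd (hW : Wᵀ * W = 1) (s s' : ℕ → ℝ) :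
    (U * rectDiag n d s * Wᵀ) * (U * rectDiag n d s' * Wᵀ)ᵀ =
      U * diagonal (fun i : Fin n => if (i : ℕ) < d then s i * s' i else 0) * Uᵀ := by
  rw [← rectDiag_mul_transpose]
  simp only [transpose_mul, transpose_transpose, Matrix.mul_assoc]
  rw [← Matrix.mul_assoc Wᵀ W, hW, Matrix.one_mul]

theorem frobNorm_mul_svd_sq (hW : Wᵀ * W = 1) (M : Matrix (Fin n) (Fin n) ℝ) (s : ℕ → ℝ) :
    frobNorm (M * (U * rectDiag n d s * Wᵀ)) ^ 2 =
      ∑ i : Fin n, (Uᵀ * (Mᵀ * M) * U) i i * (if (i : ℕ) < d then s i ^ 2 else 0) := by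
  rw [frobNorm_sq_eq_trace, transpose_mul, ← Matrix.mul_assoc, Matrix.mul_assoc M,
    svd_mul_transpose_svd hW]
  set D := diagonal fun i : Fin n => if (i : ℕ) < d then s i * s i else 0
  calc (M * (U * D * Uᵀ) * Mᵀ).trace = ((M * U * D) * (Uᵀ * Mᵀ)).trace := by
        simp only [Matrix.mul_assoc]
    _ = ((Uᵀ * (Mᵀ * M) * U) * D).trace := by
        rw [trace_mul_comm]; simp only [Matrix.mul_assoc]
    _ = _ := by simp [D, trace, mul_diagonal, sq]

theorem frobNorm_svd_sq (hU : Uᵀ * U = 1) (hW : Wᵀ * W = 1) (s : ℕ → ℝ) :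
    frobNorm (U * rectDiag n d s * Wᵀ) ^ 2 =
      ∑ i : Fin n, if (i : ℕ) < d then s i ^ 2 else 0 := by
  simpa [hU] using frobNorm_mul_svd_sq (U := U) hW 1 s

theorem svd_sub_svd_truncate_mul_transpose (hW : Wᵀ * W = 1) (s : ℕ → ℝ) :
    (U * rectDiag n d s * Wᵀ - U * rectDiag n d (truncate k s) * Wᵀ) *
      (U * rectDiag n d (truncate k s) * Wᵀ)ᵀ = 0 := by
  have hdisj : (fun i : Fin n =>
      if (i : ℕ) < d then (s - truncate k s) i * truncate k s i else 0) = fun _ => 0 := by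
    funext i
    simp only [truncate, Pi.sub_apply]
    split_ifs <;> ring
  rw [← Matrix.sub_mul, ← Matrix.mul_sub, ← rectDiag_sub, svd_mul_transpose_svd hW, hdisj,
    diagonal_zero, Matrix.mul_zero, Matrix.zero_mul]

theorem frobNorm_svd_sub_svd_truncate_sq_le (hU : Uᵀ * U = 1) (hW : Wᵀ * W = 1) {s : ℕ → ℝ}
    (hs : Antitone s) (hs0 : ∀ i, 0 ≤ s i) (hkn : k ≤ n) {Q : Matrix (Fin n) (Fin n) ℝ}
    (hQs : Q.IsSymm) (hQi : IsIdempotentElem Q) (hQk : Q.trace ≤ k) :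
    frobNorm (U * rectDiag n d s * Wᵀ - U * rectDiag n d (truncate k s) * Wᵀ) ^ 2 ≤
      frobNorm ((1 - Q) * (U * rectDiag n d s * Wᵀ)) ^ 2 := by
  set A := U * rectDiag n d s * Wᵀ
  set e : ℕ → ℝ := fun i => if i < d then s i ^ 2 else 0
  have he : Antitone e := fun i j hij => by
    have := hs hij
    simp only [e]
    split_ifs <;> first | omega | nlinarith [hs0 i, hs0 j]
  have hUU : U * Uᵀ = 1 := mul_eq_one_comm.mp hU
  set G := Uᵀ * Q * U
  have hGs : G.IsSymm := by simp [G, IsSymm, transpose_mul, hQs.eq, Matrix.mul_assoc]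
  have hGi : IsIdempotentElem G := by
    simp only [G, IsIdempotentElem, Matrix.mul_assoc]
    rw [← Matrix.mul_assoc U, hUU, Matrix.one_mul, ← Matrix.mul_assoc Q, hQi.eq]
  have hGk : ∑ i, G i i ≤ k := by
    change G.trace ≤ k
    rwa [trace_mul_cycle, hUU, Matrix.one_mul]
  have hQA : frobNorm (Q * A) ^ 2 = ∑ i, G i i * e i := by
    rw [frobNorm_mul_svd_sq hW, hQs.eq, hQi.eq]
  have hres : frobNorm (A - U * rectDiag n d (truncate k s) * Wᵀ) ^ 2 =
      ∑ i : Fin n, e i - ∑ i : Fin n, (if (i : ℕ) < k then e i else 0) := by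
    rw [← Matrix.sub_mul, ← Matrix.mul_sub, ← rectDiag_sub, frobNorm_svd_sq hU hW,
      ← Finset.sum_sub_distrib]
    refine Finset.sum_congr rfl fun i _ => ?_
    simp only [e, truncate, Pi.sub_apply]
    split_ifs <;> ring
  have hbathtub := sum_mul_le_sum_lt_of_antitone hkn he (by positivity)
    (diag_mem_Icc_of_isSymm_of_isIdempotentElem hGs hGi) hGk
  have hsplit := frobNorm_mul_sq_add_frobNorm_one_sub_mul_sq hQs hQi A
  rw [hQA, frobNorm_svd_sq hU hW s] at hsplit
  rw [hres]
  linarith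

end SVD

theorem transpose_mul_self_submatrix_castLE {W : Matrix (Fin d) (Fin d) ℝ} (hW : Wᵀ * W = 1)
    (hkd : k ≤ d) :
    (W.submatrix id (Fin.castLE hkd))ᵀ * W.submatrix id (Fin.castLE hkd) = 1 := by
  rw [transpose_submatrix, ← submatrix_mul _ _ _ id _ Function.bijective_id, hW,
    submatrix_one _ (Fin.castLE_injective hkd)]

end Matrix

namespace IsIndicator

open Matrix

variable {n k : ℕ} {X : Matrix (Fin n) (Fin k) ℝ}

/-- Empty clusters (`z j = 0`) give zero columns, so `Xᵀ * X` is in general only idempotent,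
not `1`. -/
theorem isIdempotentElem_transpose_mul_self (hX : IsIndicator X) :
    IsIdempotentElem (Xᵀ * X) := by
  obtain ⟨f, hf⟩ := hX
  set z : Fin k → ℝ := fun j => ((Finset.univ.filter fun i => f i = j).card : ℝ)
  have hG : Xᵀ * X = diagonal fun j => z j / z j := by
    ext j j'
    simp only [mul_apply, transpose_apply, hf, diagonal_apply]
    by_cases hj : j = j'
    · subst hj
      simp [z, ← sq, Finset.sum_ite, Real.sq_sqrt (Nat.cast_nonneg _), div_eq_mul_inv]
    · simp only [hj, if_false]
      refine Finset.sum_eq_zero fun i _ => ?_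
      split_ifs <;> simp_all
  rw [hG, IsIdempotentElem, diagonal_mul_diagonal]
  congr 1
  funext j
  rcases eq_or_ne (z j) 0 with h | h <;> simp [h]

theorem isSymm_and_isIdempotentElem_and_trace_le (hX : IsIndicator X) :
    (X * Xᵀ).IsSymm ∧ IsIdempotentElem (X * Xᵀ) ∧ (X * Xᵀ).trace ≤ k :=
  ⟨transpose_mul _ _, isIdempotentElem_mul_transpose hX.isIdempotentElem_transpose_mul_self,
    trace_mul_transpose_le_of_isIdempotentElem hX.isIdempotentElem_transpose_mul_self⟩

end IsIndicator

open Matrix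

/-- deterministic form of the main theorem. -/
theorem statement1 (n d k ρ t : ℕ) (hkn : k < n) (hkd : k < d)
    (ε γ : ℝ) (hε0 : 0 < ε) (hε : ε < 1 / 3) (hγ : 1 ≤ γ)
    (A : Matrix (Fin n) (Fin d) ℝ)
    (U : Matrix (Fin n) (Fin n) ℝ) (W : Matrix (Fin d) (Fin d) ℝ) (σ : ℕ → ℝ)
    (hU : Uᵀ * U = 1) (hW : Wᵀ * W = 1)
    (hmono : ∀ i j : ℕ, i ≤ j → σ j ≤ σ i)
    (hzero : ∀ i : ℕ, ρ ≤ i → σ i = 0)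
    (hA : A = U * (Matrix.of fun (i : Fin n) (j : Fin d) =>
      if (i : ℕ) = (j : ℕ) then σ i else 0) * Wᵀ)
    (Ak : Matrix (Fin n) (Fin d) ℝ)
    (hAk : Ak = U * (Matrix.of fun (i : Fin n) (j : Fin d) =>
      if (i : ℕ) = (j : ℕ) ∧ (i : ℕ) < k then σ i else 0) * Wᵀ)
    (Vk : Matrix (Fin d) (Fin k) ℝ)
    (hVk : Vk = W.submatrix id (Fin.castLE (by omega)))
    (R : Matrix (Fin d) (Fin t) ℝ)
    (Xopt : Matrix (Fin n) (Fin k) ℝ) (hXopt : IsIndicator Xopt)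
    (P : Matrix (Fin t) (Fin k) ℝ)
    (ha2 : specNorm P ≤ 1 / (1 - ε))
    (hb : frobNorm (Ak - A * R * P * Vkᵀ) ≤ 4 * ε * frobNorm (A - Ak))
    (hc : frobNorm ((1 - Xopt * Xoptᵀ) * (A * R)) ≤
      Real.sqrt (1 + ε) * frobNorm ((1 - Xopt * Xoptᵀ) * A))
    (Xt : Matrix (Fin n) (Fin k) ℝ) (hXt : IsIndicator Xt)
    (hXtγ : frobNorm ((1 - Xt * Xtᵀ) * (A * R)) ^ 2 ≤
      γ * frobNorm ((1 - Xopt * Xoptᵀ) * (A * R)) ^ 2) :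
    frobNorm (A - Xt * Xtᵀ * A) ^ 2 ≤
      (1 + (1 + 28 * ε) * γ) * frobNorm (A - Xopt * Xoptᵀ * A) ^ 2 := by
  obtain ⟨hXts, hXti, -⟩ := hXt.isSymm_and_isIdempotentElem_and_trace_le
  obtain ⟨hXos, hXoi, hXok⟩ := hXopt.isSymm_and_isIdempotentElem_and_trace_le
  have hproj (Q : Matrix (Fin n) (Fin n) ℝ) : A - Q * A = (1 - Q) * A := by
    rw [Matrix.sub_mul, Matrix.one_mul]
  rw [hproj, hproj]
  set B := frobNorm ((1 - Xopt * Xoptᵀ) * A)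
  have hσ0 (i : ℕ) : 0 ≤ σ i := hzero (max i ρ) (le_max_right i ρ) ▸ hmono _ _ (le_max_left i ρ)
  replace hA : A = U * rectDiag n d σ * Wᵀ := hA
  replace hAk : Ak = U * rectDiag n d (truncate k σ) * Wᵀ := by
    rw [hAk]; congr; ext i j; simp [truncate, ite_and]
  have hEY : frobNorm (A - Ak) ≤ B := by
    have := frobNorm_svd_sub_svd_truncate_sq_le hU hW hmono hσ0 hkn.le hXos hXoi hXok
    rw [← hA, ← hAk] at this
    exact (pow_le_pow_iff_left₀ (frobNorm_nonneg _) (frobNorm_nonneg _) two_ne_zero).mp this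
  have hperp : (A - Ak) * Akᵀ = 0 := by
    rw [hA, hAk]; exact svd_sub_svd_truncate_mul_transpose hW σ
  have hV : Vkᵀ * Vk = 1 := hVk ▸ transpose_mul_self_submatrix_castLE hW _
  have hAR : frobNorm ((1 - Xt * Xtᵀ) * (A * R)) ≤ √γ * (√(1 + ε) * B) := by
    calc _ ≤ √γ * frobNorm ((1 - Xopt * Xoptᵀ) * (A * R)) :=
          (pow_le_pow_iff_left₀ (frobNorm_nonneg _)
            (mul_nonneg (Real.sqrt_nonneg _) (frobNorm_nonneg _)) two_ne_zero).mp
            (by rwa [mul_pow, Real.sq_sqrt (by linarith)])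
      _ ≤ √γ * (√(1 + ε) * B) := by gcongr
  exact frobNorm_one_sub_mul_sq_le_of_approx hε0 hε hγ hXts hXti hV hperp hEY hAR ha2
    (hb.trans (by gcongr))
end

section
/- Let A be an n×d real matrix of rank ρ, let k < ρ, let A_k be the best rank-k approximation from the truncated SVD of A and A_{ρ−k} = A − A_k, and let X be any n×k real matrix with XᵀX = I_k. Then ‖(I − XXᵀ)A‖_F² = ‖(I − XXᵀ)A_k‖_F² + ‖(I − XXᵀ)A_{ρ−k}‖_F². -/
open MeasureTheory
open scoped Matrix

lemma frob_sq' {m n : ℕ} (M : Matrix (Fin m) (Fin n) ℝ) :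
    frobNorm M ^ 2 = Matrix.trace (Mᵀ * M) := by
  rw [frobNorm, Real.sq_sqrt (by positivity)]
  simp only [Matrix.trace, Matrix.diag, Matrix.mul_apply, Matrix.transpose_apply]
  rw [Finset.sum_comm]
  exact Finset.sum_congr rfl fun j _ => Finset.sum_congr rfl fun i _ => pow_two (M i j)


/-- the Pythagorean decomposition of the k-means objective. -/
theorem statement3 (n d k ρ : ℕ) (hkρ : k < ρ) (hρn : ρ ≤ n) (hρd : ρ ≤ d)
    (A : Matrix (Fin n) (Fin d) ℝ)
    (U : Matrix (Fin n) (Fin n) ℝ) (W : Matrix (Fin d) (Fin d) ℝ) (σ : ℕ → ℝ)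
    (hU : Uᵀ * U = 1) (hW : Wᵀ * W = 1)
    (hmono : ∀ i j : ℕ, i ≤ j → σ j ≤ σ i)
    (hpos : ∀ i : ℕ, i < ρ → 0 < σ i)
    (hzero : ∀ i : ℕ, ρ ≤ i → σ i = 0)
    (hA : A = U * (Matrix.of fun (i : Fin n) (j : Fin d) =>
      if (i : ℕ) = (j : ℕ) then σ i else 0) * Wᵀ)
    (Ak : Matrix (Fin n) (Fin d) ℝ)
    (hAk : Ak = U * (Matrix.of fun (i : Fin n) (j : Fin d) =>
      if (i : ℕ) = (j : ℕ) ∧ (i : ℕ) < k then σ i else 0) * Wᵀ)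
    (X : Matrix (Fin n) (Fin k) ℝ) (hX : Xᵀ * X = 1) :
    frobNorm ((1 - X * Xᵀ) * A) ^ 2 =
      frobNorm ((1 - X * Xᵀ) * Ak) ^ 2 + frobNorm ((1 - X * Xᵀ) * (A - Ak)) ^ 2 := by
  set S : Matrix (Fin n) (Fin d) ℝ := Matrix.of fun (i : Fin n) (j : Fin d) =>
      if (i : ℕ) = (j : ℕ) then σ i else 0 with hS
  set Sk : Matrix (Fin n) (Fin d) ℝ := Matrix.of fun (i : Fin n) (j : Fin d) =>
      if (i : ℕ) = (j : ℕ) ∧ (i : ℕ) < k then σ i else 0 with hSk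
  set P : Matrix (Fin n) (Fin n) ℝ := 1 - X * Xᵀ with hP
  have hPt : Pᵀ = P := by
    simp [hP, Matrix.transpose_sub, Matrix.transpose_mul]
  have hQQ : X * Xᵀ * (X * Xᵀ) = X * Xᵀ := by
    calc X * Xᵀ * (X * Xᵀ) = X * (Xᵀ * X) * Xᵀ := by
          simp only [Matrix.mul_assoc]
      _ = X * Xᵀ := by rw [hX, Matrix.mul_one]
  have hPP : P * P = P := by
    simp only [hP, Matrix.sub_mul, Matrix.mul_sub, Matrix.one_mul, Matrix.mul_one, hQQ]
    abel
  -- structural lemmas on the diagonal factors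
  have key1 : Skᵀ * (S - Sk) = 0 := by
    have : Skᵀ * S = Skᵀ * Sk := by
      ext p q
      simp only [Matrix.mul_apply, Matrix.transpose_apply, hS, hSk, Matrix.of_apply]
      refine Finset.sum_congr rfl fun i _ => ?_
      by_cases h : (i : ℕ) < k <;> simp [h]
    rw [Matrix.mul_sub, this, sub_self]
  have key2 : Sk * (S - Sk)ᵀ = 0 := by
    have : Sk * Sᵀ = Sk * Skᵀ := by
      ext p q
      simp only [Matrix.mul_apply, Matrix.transpose_apply, hS, hSk, Matrix.of_apply]
      refine Finset.sum_congr rfl fun j _ => ?_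
      by_cases h1 : (p : ℕ) = (j : ℕ) <;> by_cases h2 : (q : ℕ) = (j : ℕ) <;>
        by_cases h3 : (j : ℕ) < k <;> simp [h1, h2, h3]
    rw [Matrix.transpose_sub, Matrix.mul_sub, this, sub_self]
  have hdiff : A - Ak = U * (S - Sk) * Wᵀ := by
    rw [hA, hAk, Matrix.mul_sub, Matrix.sub_mul]
  have hcross1 : Akᵀ * (A - Ak) = 0 := by
    rw [hdiff, hAk]
    simp only [Matrix.transpose_mul, Matrix.transpose_transpose, Matrix.mul_assoc]
    rw [← Matrix.mul_assoc Uᵀ U, hU, Matrix.one_mul, ← Matrix.mul_assoc Skᵀ, key1]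
    simp
  have hcross2 : Ak * (A - Ak)ᵀ = 0 := by
    rw [hdiff, hAk]
    simp only [Matrix.transpose_mul, Matrix.transpose_transpose, Matrix.mul_assoc]
    rw [← Matrix.mul_assoc Wᵀ W, hW, Matrix.one_mul, ← Matrix.mul_assoc Sk, key2]
    simp
  -- the cross trace vanishes
  have hzt : Matrix.trace ((P * Ak)ᵀ * (P * (A - Ak))) = 0 := by
    have h1 : (P * Ak)ᵀ * (P * (A - Ak)) = Akᵀ * (P * (A - Ak)) := by
      rw [Matrix.transpose_mul, hPt, Matrix.mul_assoc, ← Matrix.mul_assoc P P, hPP]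
    have h2 : Akᵀ * (P * (A - Ak)) =
        Akᵀ * (A - Ak) - (Akᵀ * X) * (Xᵀ * (A - Ak)) := by
      rw [hP, Matrix.sub_mul, Matrix.one_mul, Matrix.mul_sub]
      simp only [Matrix.mul_assoc]
    have h3 : (A - Ak) * Akᵀ = 0 := by
      have := congrArg Matrix.transpose hcross2
      simpa using this
    rw [h1, h2, hcross1, Matrix.trace_sub, Matrix.trace_zero, zero_sub,
      Matrix.trace_mul_comm, Matrix.mul_assoc, ← Matrix.mul_assoc (A - Ak), h3]
    simp
  have hsplit : P * A = P * Ak + P * (A - Ak) := by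
    rw [Matrix.mul_sub]; abel
  rw [frob_sq', frob_sq', frob_sq', hsplit, Matrix.transpose_add, Matrix.add_mul,
    Matrix.mul_add, Matrix.mul_add, Matrix.trace_add, Matrix.trace_add,
    Matrix.trace_add, hzt]
  have hzt2 : Matrix.trace ((P * (A - Ak))ᵀ * (P * Ak)) = 0 := by
    rw [← Matrix.trace_transpose, Matrix.transpose_mul, Matrix.transpose_transpose,
      hzt]
  rw [hzt2]
  ring
end

section
/- Let ε ∈ (0,1/3) and let Φ be a k×t real matrix (k ≤ t) of rank k whose singular values σ_1(Φ) ≥ ⋯ ≥ σ_k(Φ) all satisfy |1 − σ_i(Φ)| ≤ ε. Then ‖Φ⁺ − Φᵀ‖₂ ≤ 3ε, where Φ⁺ is the Moore–Penrose pseudoinverse of Φ and ‖·‖₂ is the spectral norm. -/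
open MeasureTheory
open scoped Matrix

/-! Diagonalise `Φ Φᵀ = U diag(σᵢ²) Uᵀ`. The Penrose conditions give `P = Φᵀ (Φ Φᵀ)⁻¹`, so
`E = P - Φᵀ = Φᵀ ((Φ Φᵀ)⁻¹ - 1)` and `Eᵀ E = U diag((1 - σᵢ²)² / σᵢ²) Uᵀ`. By the C⋆-identity
`‖E‖² = ‖Eᵀ E‖ = maxᵢ ((1 - σᵢ) (1 + σᵢ) / σᵢ)²`, and `(1 + σ) / σ ≤ 3` once `σ ≥ 1 - ε > 2/3`. -/

open scoped Matrix.Norms.L2Operator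
open Matrix Unitary

theorem Matrix.l2_opNorm_conjStarAlgAut {n 𝕜 : Type*} [Fintype n] [DecidableEq n] [RCLike 𝕜]
    (U : unitary (Matrix n n 𝕜)) (A : Matrix n n 𝕜) : ‖conjStarAlgAut 𝕜 _ U A‖ = ‖A‖ := by
  rw [conjStarAlgAut_apply, CStarRing.norm_mul_mem_unitary _ (star_mem U.2),
    CStarRing.norm_coe_unitary_mul]

theorem specNorm_eq_l2_opNorm {m n : ℕ} (M : Matrix (Fin m) (Fin n) ℝ) : specNorm M = ‖M‖ :=
  rfl

theorem mul_transpose_eq_conjStarAlgAut_diagonal_singVals {k t : ℕ}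
    (Φ : Matrix (Fin k) (Fin t) ℝ) :
    Φ * Φᵀ = conjStarAlgAut ℝ _ Φ.isHermitian_mul_conjTranspose_self.eigenvectorUnitary
      (diagonal fun i => singVals Φ i ^ 2) := by
  have hB := Φ.isHermitian_mul_conjTranspose_self
  have hμ : ∀ i, 0 ≤ hB.eigenvalues i := (posSemidef_self_mul_conjTranspose Φ).eigenvalues_nonneg
  calc Φ * Φᵀ = Φ * Φᴴ := by rw [conjTranspose_eq_transpose_of_trivial]
    _ = _ := hB.spectral_theorem
    _ = _ := by
      simp only [RCLike.ofReal_real_eq_id, Function.id_comp, singVals, Real.sq_sqrt (hμ _)]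

namespace IsMoorePenrose

variable {m n : ℕ} {Φ : Matrix (Fin m) (Fin n) ℝ} {P : Matrix (Fin n) (Fin m) ℝ}

theorem mul_mul_transpose (hP : IsMoorePenrose Φ P) : P * (Φ * Φᵀ) = Φᵀ := by
  rw [← Matrix.mul_assoc, ← hP.2.2.2, ← transpose_mul, ← Matrix.mul_assoc, hP.1]

theorem eq_transpose_mul (hP : IsMoorePenrose Φ P) {R : Matrix (Fin m) (Fin m) ℝ}
    (hR : Φ * Φᵀ * R = 1) : P = Φᵀ * R := by
  rw [← hP.mul_mul_transpose, Matrix.mul_assoc, hR, Matrix.mul_one]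

theorem sub_transpose_transpose_mul_self (hP : IsMoorePenrose Φ P)
    {R : Matrix (Fin m) (Fin m) ℝ} (hR : Φ * Φᵀ * R = 1) (hRT : Rᵀ = R) :
    (P - Φᵀ)ᵀ * (P - Φᵀ) = (R - 1) * (Φ * Φᵀ) * (R - 1) := by
  have hE : P - Φᵀ = Φᵀ * (R - 1) := by
    rw [hP.eq_transpose_mul hR, Matrix.mul_sub, Matrix.mul_one]
  rw [hE, transpose_mul, transpose_sub, hRT, transpose_one, transpose_transpose,
    Matrix.mul_assoc, ← Matrix.mul_assoc Φ, ← Matrix.mul_assoc]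

end IsMoorePenrose

theorem abs_inv_sq_sub_one_mul_sq_mul_le {σ ε : ℝ} (hε : ε < 1 / 3) (hσ : |1 - σ| ≤ ε) :
    |((σ ^ 2)⁻¹ - 1) * σ ^ 2 * ((σ ^ 2)⁻¹ - 1)| ≤ (3 * ε) ^ 2 := by
  obtain ⟨hσl, hσu⟩ := abs_le.mp hσ
  have hσ0 : 0 < σ := by linarith
  have hε0 : 0 ≤ ε := (abs_nonneg _).trans hσ
  have hfactor : ((σ ^ 2)⁻¹ - 1) * σ ^ 2 * ((σ ^ 2)⁻¹ - 1) = ((1 - σ) * ((1 + σ) / σ)) ^ 2 := by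
    field_simp
    ring
  have hratio : (1 + σ) / σ ≤ 3 := by
    rw [div_le_iff₀ hσ0]
    linarith
  rw [hfactor, abs_of_nonneg (sq_nonneg _), sq_le_sq, abs_mul,
    abs_of_pos (by positivity : 0 < (1 + σ) / σ), abs_of_nonneg (by positivity : 0 ≤ 3 * ε),
    mul_comm 3]
  exact mul_le_mul hσ hratio (by positivity) hε0

theorem statement5_general (k t : ℕ) (ε : ℝ) (hε0 : 0 < ε) (hε : ε < 1 / 3)
    (Φ : Matrix (Fin k) (Fin t) ℝ)
    (hσ : ∀ i : Fin k, |1 - singVals Φ i| ≤ ε)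
    (P : Matrix (Fin t) (Fin k) ℝ) (hP : IsMoorePenrose Φ P) :
    specNorm (P - Φᵀ) ≤ 3 * ε := by
  set φ := conjStarAlgAut ℝ _ Φ.isHermitian_mul_conjTranspose_self.eigenvectorUnitary
  set σ := singVals Φ
  have hσ0 : ∀ i, σ i ≠ 0 := fun i h => by
    have := hσ i
    rw [h, sub_zero, abs_one] at this
    linarith
  set R := φ (diagonal fun i => (σ i ^ 2)⁻¹)
  have hR : Φ * Φᵀ * R = 1 := by
    rw [mul_transpose_eq_conjStarAlgAut_diagonal_singVals, ← map_mul, diagonal_mul_diagonal,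
      ← map_one φ, ← diagonal_one]
    congr with i
    exact mul_inv_cancel₀ (pow_ne_zero 2 (hσ0 i))
  have hRT : Rᵀ = R := by
    rw [← conjTranspose_eq_transpose_of_trivial, ← star_eq_conjTranspose, ← map_star,
      star_eq_conjTranspose, diagonal_conjTranspose, star_trivial]
  have hE : (P - Φᵀ)ᴴ * (P - Φᵀ) =
      φ (diagonal fun i => ((σ i ^ 2)⁻¹ - 1) * σ i ^ 2 * ((σ i ^ 2)⁻¹ - 1)) := by
    rw [conjTranspose_eq_transpose_of_trivial, hP.sub_transpose_transpose_mul_self hR hRT,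
      mul_transpose_eq_conjStarAlgAut_diagonal_singVals, ← map_one φ, ← map_sub, ← map_mul,
      ← map_mul, ← diagonal_one, diagonal_sub, diagonal_mul_diagonal, diagonal_mul_diagonal]
  have hnorm_sq := l2_opNorm_conjTranspose_mul_self (P - Φᵀ)
  rw [hE, l2_opNorm_conjStarAlgAut, l2_opNorm_diagonal] at hnorm_sq
  rw [specNorm_eq_l2_opNorm, ← sq_le_sq₀ (norm_nonneg _) (by positivity), sq, ← hnorm_sq]
  exact (pi_norm_le_iff_of_nonneg (by positivity)).2 fun i =>
    (Real.norm_eq_abs _).trans_le (abs_inv_sq_sub_one_mul_sq_mul_le hε (hσ i))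

/-- Lemma 3 (pseudoinverse vs transpose, spectral norm bound). -/
theorem statement5 (k t : ℕ) (hkt : k ≤ t) (ε : ℝ) (hε0 : 0 < ε) (hε : ε < 1 / 3)
    (Φ : Matrix (Fin k) (Fin t) ℝ) (hrank : Φ.rank = k)
    (hσ : ∀ i : Fin k, |1 - singVals Φ i| ≤ ε)
    (P : Matrix (Fin t) (Fin k) ℝ) (hP : IsMoorePenrose Φ P) :
    specNorm (P - Φᵀ) ≤ 3 * ε :=
  statement5_general k t ε hε0 hε Φ hσ P hP
end

section
/- Let t ≥ 1 and let R be a d×t random matrix whose entries are i.i.d., each equal to +1/√t or −1/√t with probability 1/2. Then for any real matrices S ∈ ℝ^{n×d} and T ∈ ℝ^{d×k}, E[‖ST − SRRᵀT‖_F²] ≤ (2/t)·‖S‖_F²·‖T‖_F². -/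
/-!
Write `R = G / √t`, where `G` is the `d × t` matrix of fair signs and `coinGram ω a b` is the inner
product of rows `a` and `b` of `G`. Since `(R Rᵀ)_{aa} = 1`, each entry of `ST - SRRᵀT` is
`-(1/t) ∑_{a ≠ b} S_{ia} T_{bl} ⟨G_a, G_b⟩`. For `a ≠ b` and `a' ≠ b'` the products of signs in
`⟨G_a, G_b⟩ ⟨G_{a'}, G_{b'}⟩` average to zero unless each sign occurs twice, so
`E[⟨G_a, G_b⟩ ⟨G_{a'}, G_{b'}⟩] = t` if `{a', b'} = {a, b}` and `0` otherwise. Hence the expected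
square of an entry is `(1/t) ∑_{a ≠ b} f_a g_b (f_a g_b + f_b g_a)` with `f = S_{i·}`, `g = T_{·l}`,
which Cauchy–Schwarz bounds by `(2/t) ‖f‖² ‖g‖²`; summing over the entries gives the theorem.
-/

open MeasureTheory
open scoped Matrix

open Finset
open scoped BigOperators

lemma PMF.integral_uniformOfFintype {α : Type*} [Fintype α] [Nonempty α] [MeasurableSpace α]
    [MeasurableSingletonClass α] (f : α → ℝ) :
    ∫ a, f a ∂(PMF.uniformOfFintype α).toMeasure = 𝔼 a, f a := by
  rw [PMF.integral_eq_sum, Fintype.expect_eq_sum_div_card, Finset.sum_div]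
  refine Finset.sum_congr rfl fun a _ => ?_
  simp [div_eq_inv_mul]

lemma Matrix.mul_mul_apply_of_diag_eq_zero {m ι k R : Type*} [Fintype ι] [DecidableEq ι]
    [NonUnitalNonAssocSemiring R] (S : Matrix m ι R) (M : Matrix ι ι R) (T : Matrix ι k R)
    (hM : ∀ a, M a a = 0) (i : m) (l : k) :
    (S * M * T) i l = ∑ p ∈ univ.offDiag, S i p.1 * M p.1 p.2 * T p.2 l := by
  rw [Finset.sum_subset (subset_univ _) fun p _ hp => ?_]
  · simp_rw [Fintype.sum_prod_type, Matrix.mul_apply, Finset.sum_mul]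
    exact Finset.sum_comm
  · obtain ⟨a, b⟩ := p
    obtain rfl : a = b := by simpa using hp
    simp [hM]

lemma sum_offDiag_mul_add_swap_le {α : Type*} [Fintype α] [DecidableEq α] (f g : α → ℝ) :
    ∑ p ∈ univ.offDiag, f p.1 * g p.2 * (f p.1 * g p.2 + f p.2 * g p.1) ≤
      2 * (∑ a, f a ^ 2) * ∑ b, g b ^ 2 := by
  calc ∑ p ∈ univ.offDiag, f p.1 * g p.2 * (f p.1 * g p.2 + f p.2 * g p.1)
      ≤ ∑ p : α × α, f p.1 * g p.2 * (f p.1 * g p.2 + f p.2 * g p.1) := by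
        refine Finset.sum_le_sum_of_subset_of_nonneg (subset_univ _) fun p _ hp => ?_
        obtain ⟨a, b⟩ := p
        obtain rfl : a = b := by simpa using hp
        nlinarith [sq_nonneg (f a * g a)]
    _ = (∑ a, f a ^ 2) * (∑ b, g b ^ 2) + (∑ a, f a * g a) ^ 2 := by
        simp_rw [Fintype.sum_prod_type, sq, Finset.sum_mul_sum, ← Finset.sum_add_distrib]
        exact Finset.sum_congr rfl fun a _ => Finset.sum_congr rfl fun b _ => by ring
    _ ≤ 2 * (∑ a, f a ^ 2) * ∑ b, g b ^ 2 := by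
        nlinarith [Finset.sum_mul_sq_le_sq_mul_sq univ f g]

section Coins

variable {α β : Type*}

def coinSign (ω : α → β → Bool) (a : α) (j : β) : ℝ := if ω a j then 1 else -1

lemma coinSign_mul_self (ω : α → β → Bool) (a : α) (j : β) :
    coinSign ω a j * coinSign ω a j = 1 := by
  unfold coinSign; split <;> norm_num

def coinGram [Fintype β] (ω : α → β → Bool) (a b : α) : ℝ :=
  ∑ j, coinSign ω a j * coinSign ω b j

lemma coinGram_self [Fintype β] (ω : α → β → Bool) (a : α) :
    coinGram ω a a = Fintype.card β := by
  simp [coinGram, coinSign_mul_self]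

variable [DecidableEq α] [DecidableEq β]

def flipCoin (a : α) (j : β) (ω : α → β → Bool) : α → β → Bool :=
  fun i k => if i = a ∧ k = j then !ω i k else ω i k

lemma flipCoin_involutive (a : α) (j : β) : Function.Involutive (flipCoin a j) := by
  intro ω; funext i k; unfold flipCoin; split_ifs <;> simp

lemma coinSign_flipCoin (a : α) (j : β) (ω : α → β → Bool) (i : α) (k : β) :
    coinSign (flipCoin a j ω) i k =
      if i = a ∧ k = j then -coinSign ω i k else coinSign ω i k := by
  unfold coinSign flipCoin; split_ifs <;> simp_all

variable [Fintype α] [Fintype β]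

lemma expect_eq_zero_of_flipCoin_neg (a : α) (j : β) {F : (α → β → Bool) → ℝ}
    (hF : ∀ ω, F (flipCoin a j ω) = -F ω) : 𝔼 ω, F ω = 0 := by
  have h : 𝔼 ω, F (flipCoin a j ω) = 𝔼 ω, F ω :=
    Fintype.expect_equiv (flipCoin_involutive a j).toPerm _ _ fun _ => rfl
  rw [funext hF, Finset.expect_neg_distrib] at h
  linarith

lemma expect_coinSign_mul_coinSign_mul {a b : α} (hab : a ≠ b) (a' b' : α) (j j' : β) :
    𝔼 ω, coinSign ω a j * coinSign ω b j * (coinSign ω a' j' * coinSign ω b' j') =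
      if j = j' ∧ (a' = a ∧ b' = b ∨ a' = b ∧ b' = a) then 1 else 0 := by
  split_ifs with h
  · obtain ⟨rfl, ⟨rfl, rfl⟩ | ⟨rfl, rfl⟩⟩ := h
    all_goals
      rw [← Fintype.expect_const (ι := α → β → Bool) (1 : ℝ)]
      refine Finset.expect_congr rfl fun ω _ => ?_
      linear_combination (coinSign ω a' j * coinSign ω a' j) * coinSign_mul_self ω b' j
        + coinSign_mul_self ω a' j
  · -- some coin occurs exactly once among the four factors, so flipping it negates the product
    have hodd : j ≠ j' ∨ (a ≠ a' ∧ a ≠ b') ∨ (b ≠ a' ∧ b ≠ b') := by grind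
    rcases hodd with hj | ⟨h1, h2⟩ | ⟨h1, h2⟩
    · refine expect_eq_zero_of_flipCoin_neg a j fun ω => ?_
      simp [coinSign_flipCoin, hab.symm, Ne.symm hj]
    · refine expect_eq_zero_of_flipCoin_neg a j fun ω => ?_
      simp [coinSign_flipCoin, hab.symm, h1.symm, h2.symm]
    · refine expect_eq_zero_of_flipCoin_neg b j fun ω => ?_
      simp [coinSign_flipCoin, hab, h1.symm, h2.symm]

lemma expect_coinGram_mul_coinGram {p : α × α} (hp : p.1 ≠ p.2) (p' : α × α) :
    𝔼 ω : α → β → Bool, coinGram ω p.1 p.2 * coinGram ω p'.1 p'.2 =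
      if p' = p ∨ p' = p.swap then (Fintype.card β : ℝ) else 0 := by
  simp_rw [coinGram, Finset.sum_mul_sum, Finset.expect_sum_comm,
    expect_coinSign_mul_coinSign_mul hp, ite_and, Finset.sum_ite_eq, Finset.mem_univ, if_true]
  rw [Finset.sum_ite_irrel]
  simp [Prod.ext_iff]

lemma expect_sq_sum_offDiag_mul_coinGram (c : α × α → ℝ) :
    𝔼 ω : α → β → Bool, (∑ p ∈ univ.offDiag, c p * coinGram ω p.1 p.2) ^ 2 =
      Fintype.card β * ∑ p ∈ univ.offDiag, c p * (c p + c p.swap) := by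
  simp_rw [sq, Finset.sum_mul_sum, Finset.expect_sum_comm,
    mul_mul_mul_comm _ (coinGram _ _ _), ← Finset.mul_expect]
  rw [Finset.mul_sum]
  refine Finset.sum_congr rfl fun p hp => ?_
  have hp' : p.1 ≠ p.2 := (mem_offDiag.mp hp).2.2
  have hswap : p.swap ∈ (univ.offDiag : Finset (α × α)) := by simpa using hp'.symm
  have hne : p ≠ p.swap := fun h => hp' (congrArg Prod.fst h)
  simp_rw [expect_coinGram_mul_coinGram hp']
  rw [Finset.sum_eq_add_of_mem p p.swap hp hswap hne fun q _ hq => by simp [hq.1, hq.2]]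
  simp [hne.symm]
  ring

end Coins

section SignMatrix

variable {d t : ℕ}

lemma signMatrix_mul_transpose_apply (ω : Fin d → Fin t → Bool) (a b : Fin d) :
    (signMatrix d t ω * (signMatrix d t ω)ᵀ) a b = coinGram ω a b / t := by
  simp only [Matrix.mul_apply, Matrix.transpose_apply, signMatrix, Matrix.of_apply, coinGram,
    Finset.sum_div]
  refine Finset.sum_congr rfl fun j _ => ?_
  rw [div_mul_div_comm, Real.mul_self_sqrt (Nat.cast_nonneg t)]
  rfl

lemma sub_signMatrix_apply (ht : t ≠ 0) {n k : ℕ} (S : Matrix (Fin n) (Fin d) ℝ)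
    (T : Matrix (Fin d) (Fin k) ℝ) (ω : Fin d → Fin t → Bool) (i : Fin n) (l : Fin k) :
    (S * T - S * signMatrix d t ω * (signMatrix d t ω)ᵀ * T) i l =
      -(1 / t) * ∑ p ∈ univ.offDiag, S i p.1 * T p.2 l * coinGram ω p.1 p.2 := by
  have ht' : (t : ℝ) ≠ 0 := Nat.cast_ne_zero.mpr ht
  set R := signMatrix d t ω
  rw [show S * T - S * R * Rᵀ * T = S * (1 - R * Rᵀ) * T by
    rw [Matrix.mul_sub, Matrix.sub_mul, Matrix.mul_one, Matrix.mul_assoc S]]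
  rw [Matrix.mul_mul_apply_of_diag_eq_zero _ _ _ fun a => ?_, Finset.mul_sum]
  · refine Finset.sum_congr rfl fun p hp => ?_
    rw [Matrix.sub_apply, Matrix.one_apply_ne (mem_offDiag.mp hp).2.2,
      signMatrix_mul_transpose_apply]
    ring
  · rw [Matrix.sub_apply, Matrix.one_apply_eq, signMatrix_mul_transpose_apply, coinGram_self,
      Fintype.card_fin, div_self ht', sub_self]

lemma expect_sq_sub_signMatrix_apply (ht : t ≠ 0) {n k : ℕ} (S : Matrix (Fin n) (Fin d) ℝ)
    (T : Matrix (Fin d) (Fin k) ℝ) (i : Fin n) (l : Fin k) :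
    𝔼 ω, (S * T - S * signMatrix d t ω * (signMatrix d t ω)ᵀ * T) i l ^ 2 =
      1 / t * ∑ p ∈ univ.offDiag,
        S i p.1 * T p.2 l * (S i p.1 * T p.2 l + S i p.2 * T p.1 l) := by
  have ht' : (t : ℝ) ≠ 0 := Nat.cast_ne_zero.mpr ht
  simp_rw [sub_signMatrix_apply ht, mul_pow, ← Finset.mul_expect,
    expect_sq_sum_offDiag_mul_coinGram, Fintype.card_fin, Prod.fst_swap, Prod.snd_swap]
  field_simp

end SignMatrix

lemma frobNorm_sq {m n : ℕ} (M : Matrix (Fin m) (Fin n) ℝ) :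
    frobNorm M ^ 2 = ∑ i, ∑ j, M i j ^ 2 :=
  Real.sq_sqrt (by positivity)

/-- approximate matrix multiplication, second moment bound. -/
theorem statement7 (d t n k : ℕ) (ht : 1 ≤ t)
    (S : Matrix (Fin n) (Fin d) ℝ) (T : Matrix (Fin d) (Fin k) ℝ) :
    ∫ ω, frobNorm (S * T - S * signMatrix d t ω * (signMatrix d t ω)ᵀ * T) ^ 2
        ∂(signMeasure d t) ≤
      2 / (t : ℝ) * frobNorm S ^ 2 * frobNorm T ^ 2 := by
  have ht0 : t ≠ 0 := Nat.one_le_iff_ne_zero.mp ht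
  rw [signMeasure, PMF.integral_uniformOfFintype]
  simp_rw [frobNorm_sq, Finset.expect_sum_comm, expect_sq_sub_signMatrix_apply ht0]
  calc ∑ i, ∑ l, 1 / (t : ℝ) * ∑ p ∈ univ.offDiag,
        S i p.1 * T p.2 l * (S i p.1 * T p.2 l + S i p.2 * T p.1 l)
      ≤ ∑ i, ∑ l, 1 / (t : ℝ) * (2 * (∑ a, S i a ^ 2) * ∑ b, T b l ^ 2) := by
        gcongr with i _ l _
        exact sum_offDiag_mul_add_swap_le (S i) (fun b => T b l)
    _ = 2 / t * (∑ i, ∑ a, S i a ^ 2) * ∑ b, ∑ l, T b l ^ 2 := by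
        rw [Finset.sum_comm (f := fun b l => T b l ^ 2), mul_assoc, Finset.sum_mul_sum,
          Finset.mul_sum (a := 2 / (t : ℝ))]
        refine Finset.sum_congr rfl fun i _ => ?_
        rw [Finset.mul_sum (a := 2 / (t : ℝ))]
        exact Finset.sum_congr rfl fun l _ => by ring
end

section
/- Let A be an n×d real matrix of rank ρ, let k < ρ, let A_k = U_kΣ_kV_kᵀ be the truncated SVD of A, and let R be a d×t real matrix such that the k×t matrix V_kᵀR has rank k. Then A_k·R·(V_kᵀR)⁺·V_kᵀ = A_k; equivalently, ‖A_k − A_kR(V_kᵀR)⁺V_kᵀ‖_F = 0. -/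
open MeasureTheory
open scoped Matrix

/-!
The rank condition makes `V_kᵀ R` surjective, so the first Penrose condition forces
`(V_kᵀ R) P = 1`. Since `A_k` only involves the first `k` right singular vectors it factors as
`A_k = X V_kᵀ`, and then `A_k R P V_kᵀ = X (V_kᵀ R P) V_kᵀ = X V_kᵀ = A_k`.
-/

theorem Matrix.mul_eq_one_of_mul_mul_self_of_rank_eq_card {m n K : Type*} [Field K]
    [Fintype m] [Fintype n] [DecidableEq m]
    {M : Matrix m n K} {P : Matrix n m K} (hrank : M.rank = Fintype.card m)
    (hMPM : M * P * M = M) : M * P = 1 := by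
  have hsurj : Function.Surjective M.mulVecLin := by
    rw [← LinearMap.range_eq_top]
    apply Submodule.eq_top_of_finrank_eq
    rw [← Matrix.rank, hrank, Module.finrank_fintype_fun_eq_card]
  refine Matrix.toLin'.injective (LinearMap.ext fun v => ?_)
  obtain ⟨x, rfl⟩ := hsurj v
  simp only [Matrix.toLin'_apply, Matrix.mulVecLin_apply, Matrix.mulVec_mulVec, hMPM,
    Matrix.toLin'_one, LinearMap.id_apply]

theorem Matrix.mul_transpose_eq_submatrix_of_forall_notMem_range {m n o l R : Type*}
    [Fintype n] [Fintype o] [CommSemiring R] {e : o → n} (he : Function.Injective e)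
    (M : Matrix m n R) (N : Matrix l n R) (hM : ∀ i, ∀ j ∉ Set.range e, M i j = 0) :
    M * Nᵀ = M.submatrix id e * (N.submatrix id e)ᵀ := by
  ext i j
  simp only [Matrix.mul_apply, Matrix.submatrix_apply, Matrix.transpose_apply, id]
  exact (Fintype.sum_of_injective e he _ _ (fun k hk => by simp [hM i k hk]) fun _ => rfl).symm

/-- A_k R (V_kᵀ R)⁺ V_kᵀ = A_k when V_kᵀ R has full rank k. -/
theorem statement12 (n d k ρ t : ℕ) (hkρ : k < ρ) (hρd : ρ ≤ d)
    (U : Matrix (Fin n) (Fin n) ℝ) (W : Matrix (Fin d) (Fin d) ℝ) (σ : ℕ → ℝ)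
    (Ak : Matrix (Fin n) (Fin d) ℝ)
    (hAk : Ak = U * (Matrix.of fun (i : Fin n) (j : Fin d) =>
      if (i : ℕ) = (j : ℕ) ∧ (i : ℕ) < k then σ i else 0) * Wᵀ)
    (Vk : Matrix (Fin d) (Fin k) ℝ)
    (hVk : Vk = W.submatrix id (Fin.castLE (by omega)))
    (R : Matrix (Fin d) (Fin t) ℝ)
    (hrank : (Vkᵀ * R).rank = k)
    (P : Matrix (Fin t) (Fin k) ℝ) (hP : IsMoorePenrose (Vkᵀ * R) P) :
    Ak * R * P * Vkᵀ = Ak ∧ frobNorm (Ak - Ak * R * P * Vkᵀ) = 0 := by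
  have hkd : k ≤ d := by omega
  obtain ⟨X, hX⟩ : ∃ X : Matrix (Fin n) (Fin k) ℝ, Ak = X * Vkᵀ := by
    rw [hAk, Matrix.mul_assoc, hVk,
      Matrix.mul_transpose_eq_submatrix_of_forall_notMem_range (Fin.castLE_injective hkd),
      ← Matrix.mul_assoc]
    · exact ⟨_, rfl⟩
    · exact fun i j hj => if_neg fun (h : (i : ℕ) = j ∧ (i : ℕ) < k) => hj ⟨⟨j, h.1 ▸ h.2⟩, rfl⟩
  have hright : Vkᵀ * R * P = 1 :=
    Matrix.mul_eq_one_of_mul_mul_self_of_rank_eq_card (by rwa [Fintype.card_fin]) hP.1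
  have hmain : Ak * R * P * Vkᵀ = Ak := by
    rw [hX, Matrix.mul_assoc X, Matrix.mul_assoc X, hright, Matrix.mul_one]
  exact ⟨hmain, by simp [hmain, frobNorm]⟩
end
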